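/- arXiv:1711.10364 — 3 statements merged into one kernel-verified Lean document; each statement's English description precedes it below -/
import Mathlib

section
/- Let m > 0, β > 1 with β ≥ max(1 + 1/α, 2 - m) for some α > 0, and set p = 1/(β-1). Let r̄ > 0, s0 ∈ (0,1), and suppose f : [0,1] → ℝ is continuous with f(s) ≤ r̄ s^β for all 0 ≤ s ≤ s0 and f bounded on [0,1]. Then for every K > 1 there exists c > 0 such that the function w(z) = K/z^p satisfies (w^m)''(z) + c w'(z) + f(w(z)) ≤ 0 for all z ≥ K^{1/p}. -/
/-!
For `z > 0` we have `w z = K z^(-p)`, so `(w^m)'' = K^m (mp)(mp+1) z^(-mp-2)` and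
`w' = -K p z^(-p-1)`. Since `β = 1 + 1/p`, a bound `f s ≤ L s^β` on `[0, 1]` (from the growth
at `0` and boundedness elsewhere) gives `f (w z) ≤ L K^β z^(-p-1)`, and `β ≥ 2 - m` means
`mp + 2 ≥ p + 1`, so for `z ≥ 1` every term is bounded by a multiple of `z^(-p-1)` and a large
`c` absorbs them. The constraint `z ≥ K^(1/p)` is exactly `w z ≤ 1`.
-/

open Real Set

lemma deriv_const_mul_rpow_const (b a : ℝ) :
    deriv (fun x : ℝ => b * x ^ a) = fun x => b * a * x ^ (a - 1) := by
  ext x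
  simp only [deriv_const_mul_field', Real.deriv_rpow_const, mul_assoc]

lemma deriv_deriv_const_mul_rpow_const (b a : ℝ) :
    deriv (deriv (fun x : ℝ => b * x ^ a)) = fun x => b * a * (a - 1) * x ^ (a - 2) := by
  rw [deriv_const_mul_rpow_const, deriv_const_mul_rpow_const, sub_sub]
  norm_num

lemma div_rpow_eqOn_mul_rpow_neg (K p : ℝ) :
    EqOn (fun y : ℝ => K / y ^ p) (fun y => K * y ^ (-p)) (Ioi 0) := fun y hy => by
  simp only [rpow_neg hy.le, div_eq_mul_inv]

lemma deriv_div_rpow (K p : ℝ) {z : ℝ} (hz : 0 < z) :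
    deriv (fun y : ℝ => K / y ^ p) z = -(K * p) * z ^ (-p - 1) := by
  rw [((div_rpow_eqOn_mul_rpow_neg K p).eventuallyEq_of_mem (Ioi_mem_nhds hz)).deriv_eq,
    deriv_const_mul_rpow_const]
  ring

lemma deriv_deriv_div_rpow_rpow {K : ℝ} (hK : 0 ≤ K) (p m : ℝ) {z : ℝ} (hz : 0 < z) :
    deriv (deriv (fun y : ℝ => (K / y ^ p) ^ m)) z
      = K ^ m * (p * m) * (p * m + 1) * z ^ (-(p * m) - 2) := by
  have hEq : EqOn (fun y : ℝ => (K / y ^ p) ^ m) (fun y => K ^ m * y ^ (-(p * m))) (Ioi 0) :=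
    fun y hy => by
      dsimp only
      rw [div_rpow hK (rpow_nonneg hy.le _), ← rpow_mul hy.le, rpow_neg hy.le, div_eq_mul_inv]
  rw [(hEq.eventuallyEq_of_mem (Ioi_mem_nhds hz)).deriv.deriv_eq,
    deriv_deriv_const_mul_rpow_const]
  ring

lemma exists_nonneg_le_mul_rpow_of_le_on_Icc {f : ℝ → ℝ} {r s₀ β M : ℝ} (hs₀ : 0 < s₀)
    (hβ : 0 ≤ β) (hfle : ∀ s, 0 ≤ s → s ≤ s₀ → f s ≤ r * s ^ β)
    (hM : ∀ s ∈ Icc (0 : ℝ) 1, |f s| ≤ M) :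
    ∃ L, 0 ≤ L ∧ ∀ s ∈ Icc (0 : ℝ) 1, f s ≤ L * s ^ β := by
  have hM₀ : 0 ≤ M := (abs_nonneg _).trans (hM 0 (left_mem_Icc.2 zero_le_one))
  refine ⟨max r (M / s₀ ^ β), le_max_of_le_right (by positivity), fun s hs => ?_⟩
  rcases le_or_gt s s₀ with hss | hss
  · exact (hfle s hs.1 hss).trans
      (mul_le_mul_of_nonneg_right (le_max_left _ _) (rpow_nonneg hs.1 _))
  · calc f s ≤ M := (le_abs_self _).trans (hM s hs)
      _ ≤ M * (s / s₀) ^ β :=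
        le_mul_of_one_le_right hM₀ (one_le_rpow ((one_le_div hs₀).2 hss.le) hβ)
      _ = M / s₀ ^ β * s ^ β := by rw [div_rpow hs.1 hs₀.le]; ring
      _ ≤ max r (M / s₀ ^ β) * s ^ β :=
        mul_le_mul_of_nonneg_right (le_max_right _ _) (rpow_nonneg hs.1 _)

theorem stmt_4_general (m α β rbar s0 : ℝ) (f : ℝ → ℝ) (hm : 0 < m) (hβ : 1 < β)
    (hβ' : max (1 + 1 / α) (2 - m) ≤ β) (hs0 : s0 ∈ Set.Ioo (0 : ℝ) 1)
    (hfle : ∀ s : ℝ, 0 ≤ s → s ≤ s0 → f s ≤ rbar * s ^ β)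
    (hfb : ∃ M : ℝ, ∀ s ∈ Set.Icc (0 : ℝ) 1, |f s| ≤ M) :
    ∀ K : ℝ, 1 < K → ∃ c : ℝ, 0 < c ∧ ∀ z : ℝ, K ^ (β - 1) ≤ z →
      deriv (deriv (fun y : ℝ => (K / y ^ (1 / (β - 1))) ^ m)) z
        + c * deriv (fun y : ℝ => K / y ^ (1 / (β - 1))) z
        + f (K / z ^ (1 / (β - 1))) ≤ 0 := by
  intro K hK
  obtain ⟨M, hM⟩ := hfb
  obtain ⟨L, hL₀, hL⟩ :=
    exists_nonneg_le_mul_rpow_of_le_on_Icc hs0.1 (by linarith) hfle hM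
  set p := 1 / (β - 1) with hp_def
  have hp : 0 < p := one_div_pos.2 (sub_pos.2 hβ)
  have hK₀ : 0 < K := by linarith
  set A := K ^ m * (p * m) * (p * m + 1)
  have hA : 0 < A := by positivity
  refine ⟨(A + L * K ^ β) / (K * p), by positivity, fun z hz => ?_⟩
  have hz₁ : 1 ≤ z := (one_le_rpow hK.le (sub_pos.2 hβ).le).trans hz
  have hz₀ : 0 < z := one_pos.trans_le hz₁
  have hKz : K ≤ z ^ p := by
    rwa [hp_def, one_div, le_rpow_inv_iff_of_pos hK₀.le hz₀.le (sub_pos.2 hβ)]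
  have hw : K / z ^ p ∈ Icc (0 : ℝ) 1 :=
    ⟨by positivity, (div_le_one (rpow_pos_of_pos hz₀ _)).2 hKz⟩
  have hwβ : (K / z ^ p) ^ β = K ^ β * z ^ (-p - 1) := by
    rw [div_rpow hK₀.le (rpow_nonneg hz₀.le _), ← rpow_mul hz₀.le,
      show p * β = -(-p - 1) by rw [hp_def]; field_simp [(sub_pos.2 hβ).ne']; ring,
      rpow_neg hz₀.le, div_eq_mul_inv, inv_inv]
  have hexp : z ^ (-(p * m) - 2) ≤ z ^ (-p - 1) := by
    refine rpow_le_rpow_of_exponent_le hz₁ ?_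
    have : p * (1 - m) ≤ 1 := by
      rw [hp_def, div_mul_eq_mul_div, one_mul, div_le_one (sub_pos.2 hβ)]
      linarith [le_max_right (1 + 1 / α) (2 - m)]
    linarith
  rw [deriv_deriv_div_rpow_rpow hK₀.le p m hz₀, deriv_div_rpow K p hz₀]
  have hf := hL _ hw
  rw [hwβ] at hf
  have hcancel : (A + L * K ^ β) / (K * p) * (-(K * p) * z ^ (-p - 1))
      = -(A * z ^ (-p - 1)) - L * K ^ β * z ^ (-p - 1) := by
    field_simp; ring
  linarith [mul_le_mul_of_nonneg_left hexp hA.le]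

theorem stmt_4 (m α β rbar s0 : ℝ) (f : ℝ → ℝ) (hm : 0 < m) (hα : 0 < α) (hβ : 1 < β)
    (hβ' : max (1 + 1 / α) (2 - m) ≤ β) (hr : 0 < rbar) (hs0 : s0 ∈ Set.Ioo (0 : ℝ) 1)
    (hf : ContinuousOn f (Set.Icc 0 1))
    (hfle : ∀ s : ℝ, 0 ≤ s → s ≤ s0 → f s ≤ rbar * s ^ β)
    (hfb : ∃ M : ℝ, ∀ s ∈ Set.Icc (0 : ℝ) 1, |f s| ≤ M) :
    ∀ K : ℝ, 1 < K → ∃ c : ℝ, 0 < c ∧ ∀ z : ℝ, K ^ (β - 1) ≤ z →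
      deriv (deriv (fun y : ℝ => (K / y ^ (1 / (β - 1))) ^ m)) z
        + c * deriv (fun y : ℝ => K / y ^ (1 / (β - 1))) z
        + f (K / z ^ (1 / (β - 1))) ≤ 0 :=
  stmt_4_general m α β rbar s0 f hm hβ hβ' hs0 hfle hfb
end

section
/- Let c > 0 and g : [0,1] → ℝ continuous with g ≥ 0 and lim_{s→0+} g(s)/s = +∞. Suppose V : [0,∞) → (0,1] is C² with V'' + c V' + g(V) = 0, V' < 0 on (0,∞), and V(y) → 0, V'(y) → 0 as y → +∞. Then c V(y) ≥ -V'(y) for all y > 0, and there cannot exist a sequence y_k → +∞ with c V'(y_k) + g(V(y_k)) ≤ 0. -/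
open Real Filter

theorem stmt_11 (c : ℝ) (g V : ℝ → ℝ) (hc : 0 < c)
    (hg : ContinuousOn g (Set.Icc 0 1)) (hg0 : ∀ s ∈ Set.Icc (0 : ℝ) 1, 0 ≤ g s)
    (hginf : Tendsto (fun s => g s / s) (nhdsWithin 0 (Set.Ioi 0)) atTop)
    (hV2 : ContDiffOn ℝ 2 V (Set.Ici 0))
    (hVrange : ∀ y : ℝ, 0 ≤ y → 0 < V y ∧ V y ≤ 1)
    (hode : ∀ y : ℝ, 0 ≤ y → deriv (deriv V) y + c * deriv V y + g (V y) = 0)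
    (hV' : ∀ y : ℝ, 0 < y → deriv V y < 0)
    (hV0 : Tendsto V atTop (nhds 0))
    (hV'0 : Tendsto (deriv V) atTop (nhds 0)) :
    (∀ y : ℝ, 0 < y → c * V y ≥ -deriv V y) ∧
    ¬ ∃ ys : ℕ → ℝ, Tendsto ys atTop atTop ∧
        ∀ k : ℕ, c * deriv V (ys k) + g (V (ys k)) ≤ 0 := by
  -- Auxiliary function W = c V + V'
  set W : ℝ → ℝ := fun y => c * V y + deriv V y with hW
  -- smoothness on the open set Ioi 0
  have hVo : ContDiffOn ℝ 2 V (Set.Ioi 0) := hV2.mono Set.Ioi_subset_Ici_self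
  have hV'o : ContDiffOn ℝ 1 (deriv V) (Set.Ioi 0) :=
    hVo.deriv_of_isOpen isOpen_Ioi (by norm_num)
  have hVdiff : ∀ y : ℝ, 0 < y → DifferentiableAt ℝ V y := by
    intro y hy
    exact (hVo.differentiableOn (by norm_num)).differentiableAt
      (isOpen_Ioi.mem_nhds hy)
  have hV'diff : ∀ y : ℝ, 0 < y → DifferentiableAt ℝ (deriv V) y := by
    intro y hy
    exact (hV'o.differentiableOn (by norm_num)).differentiableAt
      (isOpen_Ioi.mem_nhds hy)
  have hWderiv : ∀ y : ℝ, 0 < y →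
      HasDerivAt W (c * deriv V y + deriv (deriv V) y) y := by
    intro y hy
    exact (((hVdiff y hy).hasDerivAt.const_mul c).add (hV'diff y hy).hasDerivAt)
  have hWdiff : DifferentiableOn ℝ W (Set.Ioi 0) := fun y hy =>
    ((hWderiv y hy).differentiableAt).differentiableWithinAt
  have hWderiv_nonpos : ∀ y ∈ Set.Ioi (0:ℝ), deriv W y ≤ 0 := by
    intro y hy
    rw [(hWderiv y hy).deriv]
    have hrange := hVrange y (le_of_lt hy)
    have hgV : 0 ≤ g (V y) := hg0 _ ⟨le_of_lt hrange.1, hrange.2⟩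
    have := hode y (le_of_lt hy)
    linarith
  have hWanti : AntitoneOn W (Set.Ioi 0) := by
    apply antitoneOn_of_deriv_nonpos (convex_Ioi 0) hWdiff.continuousOn
    · rw [interior_Ioi]; exact hWdiff
    · rw [interior_Ioi]; exact hWderiv_nonpos
  have hWlim : Tendsto W atTop (nhds 0) := by
    have := (hV0.const_mul c).add hV'0
    simpa using this
  -- Part 1
  have part1 : ∀ y : ℝ, 0 < y → c * V y ≥ -deriv V y := by
    intro y hy
    have h0 : (0:ℝ) ≤ W y := by
      apply le_of_tendsto hWlim
      filter_upwards [eventually_ge_atTop (y + 1)] with z hz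
      exact hWanti hy (by simp only [Set.mem_Ioi]; linarith) (by linarith)
    simp only [hW] at h0
    linarith
  refine ⟨part1, ?_⟩
  rintro ⟨ys, hys, hineq⟩
  -- V ∘ ys tends to 0 from the right
  have hVys : Tendsto (fun k => V (ys k)) atTop (nhdsWithin 0 (Set.Ioi 0)) := by
    rw [tendsto_nhdsWithin_iff]
    refine ⟨hV0.comp hys, ?_⟩
    filter_upwards [hys.eventually (eventually_ge_atTop (0:ℝ))] with k hk
    exact (hVrange _ hk).1
  have hquot : Tendsto (fun k => g (V (ys k)) / V (ys k)) atTop atTop :=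
    hginf.comp hVys
  have hbig : ∀ᶠ k in atTop, g (V (ys k)) / V (ys k) > c * c :=
    hquot.eventually (eventually_gt_atTop (c * c))
  have hpos : ∀ᶠ k in atTop, (0:ℝ) < ys k :=
    hys.eventually (eventually_gt_atTop (0:ℝ))
  obtain ⟨k, hk1, hk2⟩ := (hbig.and hpos).exists
  have hVk : 0 < V (ys k) := (hVrange _ (le_of_lt hk2)).1
  have h1 : g (V (ys k)) ≤ -(c * deriv V (ys k)) := by
    have := hineq k; linarith
  have h2 : -deriv V (ys k) ≤ c * V (ys k) := part1 _ hk2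
  have h3 : g (V (ys k)) ≤ c * c * V (ys k) := by
    have : -(c * deriv V (ys k)) = c * (-deriv V (ys k)) := by ring
    rw [this] at h1
    calc g (V (ys k)) ≤ c * (-deriv V (ys k)) := h1
      _ ≤ c * (c * V (ys k)) := by
          exact mul_le_mul_of_nonneg_left h2 (le_of_lt hc)
      _ = c * c * V (ys k) := by ring
  have h4 : g (V (ys k)) / V (ys k) ≤ c * c := by
    rw [div_le_iff₀ hVk]; linarith [h3]
  linarith
end

section
/- Let m, r̄, ε > 0, β ≥ 1 and suppose f : [0,1] → ℝ satisfies f(s) ≤ r̄ s^β for 0 ≤ s ≤ 1. Let w(t,x) > 0 solve ∂_t w = (r̄ + ε/2) w^β with ∂_x w = φ w^β for φ = u0'/u0^β, and suppose at a point (t,x) with 0 < w(t,x) < 1 and m ≥ 1 that m|φ'(x)| + m(m+β-1)φ(x)² ≤ ε/2. Then ∂_t w - ∂_{xx}(w^m) - f(w) ≥ 0 at (t,x). -/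
/-!
Since `∂ₓw = φ w^β`, the chain rule gives `∂ₓₓ(w^m) = m φ' w^(m+β-1) + m(m+β-1) φ² w^(m+2β-2)`.
For `0 < w < 1` both powers are at most `w^β`, because `m ≥ 1` makes both exponents at least `β`;
so the diffusion term is at most `(m|φ'| + m(m+β-1)φ²) w^β ≤ (ε/2) w^β`, while the reaction
term is at most `r̄ w^β`. Together they are absorbed by the growth rate `(r̄ + ε/2) w^β`.
-/

open Real

namespace Real

variable {g φ : ℝ → ℝ} {β : ℝ}

theorem hasDerivAt_rpow_of_hasDerivAt_mul_rpow {y : ℝ} (p : ℝ)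
    (hg : HasDerivAt g (φ y * g y ^ β) y) (hpos : 0 < g y) :
    HasDerivAt (fun z => g z ^ p) (p * φ y * g y ^ (p + β - 1)) y := by
  convert hg.rpow_const (p := p) (Or.inl hpos.ne') using 1
  rw [show p + β - 1 = β + (p - 1) by ring, rpow_add hpos]
  ring

theorem deriv_deriv_rpow_of_hasDerivAt_mul_rpow {x : ℝ} (m : ℝ)
    (hφ : DifferentiableAt ℝ φ x) (hpos : ∀ y, 0 < g y)
    (hg : ∀ y, HasDerivAt g (φ y * g y ^ β) y) :
    deriv (deriv fun y => g y ^ m) x =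
      m * deriv φ x * g x ^ (m + β - 1) + m * (m + β - 1) * φ x ^ 2 * g x ^ (m + 2 * β - 2) := by
  have hfirst : deriv (fun y => g y ^ m) = fun y => m * φ y * g y ^ (m + β - 1) :=
    funext fun y => (hasDerivAt_rpow_of_hasDerivAt_mul_rpow m (hg y) (hpos y)).deriv
  have hsecond : HasDerivAt (fun y => m * φ y * g y ^ (m + β - 1)) _ x :=
    (hφ.hasDerivAt.const_mul m).mul
      (hasDerivAt_rpow_of_hasDerivAt_mul_rpow (m + β - 1) (hg x) (hpos x))
  rw [hfirst, hsecond.deriv, show m + 2 * β - 2 = (m + β - 1) + β - 1 by ring]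
  ring

theorem deriv_deriv_rpow_le_of_hasDerivAt_mul_rpow {x m : ℝ} (hm : 1 ≤ m) (hβ : 1 ≤ β)
    (hφ : DifferentiableAt ℝ φ x) (hpos : ∀ y, 0 < g y) (hg1 : g x ≤ 1)
    (hg : ∀ y, HasDerivAt g (φ y * g y ^ β) y) :
    deriv (deriv fun y => g y ^ m) x ≤
      (m * |deriv φ x| + m * (m + β - 1) * φ x ^ 2) * g x ^ β := by
  rw [deriv_deriv_rpow_of_hasDerivAt_mul_rpow m hφ hpos hg]
  have hle_pow : ∀ a, β ≤ a → g x ^ a ≤ g x ^ β := fun a ha =>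
    rpow_le_rpow_of_exponent_ge (hpos x) hg1 ha
  have hdrift : m * deriv φ x * g x ^ (m + β - 1) ≤ m * |deriv φ x| * g x ^ β :=
    calc m * deriv φ x * g x ^ (m + β - 1) ≤ m * |deriv φ x| * g x ^ (m + β - 1) := by
          gcongr
          · exact (rpow_pos_of_pos (hpos x) _).le
          · exact le_abs_self _
      _ ≤ m * |deriv φ x| * g x ^ β :=
          mul_le_mul_of_nonneg_left (hle_pow _ (by linarith))
            (mul_nonneg (by linarith) (abs_nonneg _))
  have hcoef : 0 ≤ m * (m + β - 1) * φ x ^ 2 :=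
    mul_nonneg (mul_nonneg (by linarith) (by linarith)) (sq_nonneg _)
  have hcurv : m * (m + β - 1) * φ x ^ 2 * g x ^ (m + 2 * β - 2) ≤
      m * (m + β - 1) * φ x ^ 2 * g x ^ β :=
    mul_le_mul_of_nonneg_left (hle_pow _ (by linarith)) hcoef
  linarith

end Real

theorem stmt_18_general (m rbar ε β t x : ℝ) (f : ℝ → ℝ) (w : ℝ → ℝ → ℝ) (φ : ℝ → ℝ)
    (hm : 1 ≤ m) (hβ : 1 ≤ β)
    (hf : ∀ s : ℝ, 0 ≤ s → s ≤ 1 → f s ≤ rbar * s ^ β)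
    (hφ : Differentiable ℝ φ)
    (hwpos : ∀ y : ℝ, 0 < w t y)
    (hwx : ∀ y : ℝ, HasDerivAt (fun z => w t z) (φ y * w t y ^ β) y)
    (hwx1 : w t x < 1)
    (hsmall : m * |deriv φ x| + m * (m + β - 1) * φ x ^ 2 ≤ ε / 2) :
    (rbar + ε / 2) * w t x ^ β - deriv (deriv (fun y => w t y ^ m)) x - f (w t x) ≥ 0 := by
  have hdiffusion := deriv_deriv_rpow_le_of_hasDerivAt_mul_rpow hm hβ (hφ x) hwpos hwx1.le hwx
  have hreaction := hf (w t x) (hwpos x).le hwx1.le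
  have hpow : 0 ≤ w t x ^ β := (rpow_pos_of_pos (hwpos x) β).le
  nlinarith [mul_le_mul_of_nonneg_right hsmall hpow]

theorem stmt_18 (m rbar ε β t x : ℝ) (f : ℝ → ℝ) (w : ℝ → ℝ → ℝ) (φ : ℝ → ℝ)
    (hm : 1 ≤ m) (hr : 0 < rbar) (hε : 0 < ε) (hβ : 1 ≤ β)
    (hf : ∀ s : ℝ, 0 ≤ s → s ≤ 1 → f s ≤ rbar * s ^ β)
    (hφ : Differentiable ℝ φ)
    (hwpos : ∀ y : ℝ, 0 < w t y)
    (hwt : HasDerivAt (fun s => w s x) ((rbar + ε / 2) * w t x ^ β) t)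
    (hwx : ∀ y : ℝ, HasDerivAt (fun z => w t z) (φ y * w t y ^ β) y)
    (hwx1 : w t x < 1)
    (hsmall : m * |deriv φ x| + m * (m + β - 1) * φ x ^ 2 ≤ ε / 2) :
    (rbar + ε / 2) * w t x ^ β - deriv (deriv (fun y => w t y ^ m)) x - f (w t x) ≥ 0 :=
  stmt_18_general m rbar ε β t x f w φ hm hβ hf hφ hwpos hwx hwx1 hsmall
end
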